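/- arXiv:2604.13591 — 3 statements merged into one kernel-verified Lean document; each statement's English description precedes it below -/
import Mathlib

section
/- Let Q > 2, S > 0 and C > 0 be real numbers, set p = 2Q/(Q−2) and q = (Q−2)/2, and for ε > 0 define Φ_ε(s) = (s²/2)·S^{Q/2} − (s^p/p)·S^{Q/2} + C·s^p·ε^q for s ≥ 0. Then there exist ε₀ > 0 and C′ > 0 such that for every ε ∈ (0, ε₀), sup_{s ≥ 0} Φ_ε(s) ≤ (1/Q)·S^{Q/2} + C′·ε^{(Q−2)/2}. -/
/-!
Write `A = S^(Q/2)` and `x = p C ε^q / A`, so that `Φ ε s = A s²/2 - A (1 - x) sᵖ/p`. Rescaling `s`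
and Young's inequality `t²/2 ≤ tᵖ/p + (1/2 - 1/p)` give the exact supremum
`(1/2 - 1/p) A (1 - x)^(-2/(p-2)) = (A/Q) (1 - x)^(-q)`, and Bernoulli's inequality bounds
`(1 - x)^(-q)` by `1 + 2 max(q, 1) x` once `x` is small, which is linear in `ε^q`.
-/

open Real

lemma sq_div_two_sub_rpow_div_le {p t : ℝ} (hp : 2 < p) (ht : 0 ≤ t) :
    t ^ 2 / 2 - t ^ p / p ≤ 1 / 2 - 1 / p := by
  have hp0 : 0 < p := by linarith
  have hw : 2 / p ≤ 1 := (div_le_one hp0).mpr hp.le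
  have amgm := geom_mean_le_arith_mean2_weighted (div_nonneg zero_le_two hp0.le)
    (sub_nonneg.mpr hw) (rpow_nonneg ht p) zero_le_one (add_sub_cancel _ _)
  have hpow : (t ^ p) ^ (2 / p) = t ^ 2 := by
    rw [← rpow_mul ht, mul_div_cancel₀ _ hp0.ne', rpow_two]
  rw [hpow, one_rpow, mul_one, mul_one] at amgm
  have : t ^ 2 / 2 ≤ t ^ p / p + (1 / 2 - 1 / p) := by
    calc t ^ 2 / 2 ≤ (2 / p * t ^ p + (1 - 2 / p)) / 2 := by gcongr
      _ = t ^ p / p + (1 / 2 - 1 / p) := by ring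
  linarith

-- Equality holds at `s = (a/b)^(1/(p-2))`.
lemma mul_sq_div_two_sub_mul_rpow_div_le {p a b s : ℝ} (hp : 2 < p) (ha : 0 < a) (hb : 0 < b)
    (hs : 0 ≤ s) :
    a * s ^ 2 / 2 - b * s ^ p / p ≤ (1 / 2 - 1 / p) * a * (a / b) ^ (2 / (p - 2)) := by
  have hp2 : p - 2 ≠ 0 := by linarith
  set r := (a / b) ^ (1 / (p - 2))
  have hr : 0 < r := by positivity
  have hr_sub : r ^ (p - 2) = a / b := by
    rw [← rpow_mul (by positivity), one_div_mul_cancel hp2, rpow_one]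
  have hr_sq : r ^ 2 = (a / b) ^ (2 / (p - 2)) := by
    rw [← rpow_two, ← rpow_mul (by positivity)]; ring_nf
  have hr_pow : b * r ^ p = a * r ^ 2 := by
    rw [show p = (p - 2) + 2 by ring, rpow_add hr, hr_sub, rpow_two]; field_simp
  obtain ⟨t, ht, rfl⟩ : ∃ t, 0 ≤ t ∧ s = r * t := ⟨s / r, by positivity, by field_simp⟩
  have key := mul_le_mul_of_nonneg_left (sq_div_two_sub_rpow_div_le hp ht)
    (by positivity : 0 ≤ a * r ^ 2)
  rw [← hr_sq]
  calc a * (r * t) ^ 2 / 2 - b * (r * t) ^ p / p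
      = a * r ^ 2 * (t ^ 2 / 2) - b * r ^ p * t ^ p / p := by
        rw [mul_rpow hr.le ht]; ring
    _ = a * r ^ 2 * (t ^ 2 / 2 - t ^ p / p) := by rw [hr_pow]; ring
    _ ≤ (1 / 2 - 1 / p) * a * r ^ 2 := by linarith

lemma one_sub_mul_le_one_sub_rpow {q x : ℝ} (hx₀ : 0 ≤ x) (hx₁ : x < 1) :
    1 - max q 1 * x ≤ (1 - x) ^ q := by
  calc 1 - max q 1 * x = 1 + max q 1 * (-x) := by ring
    _ ≤ (1 + -x) ^ max q 1 := one_add_mul_self_le_rpow_one_add (by linarith) (le_max_right _ _)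
    _ ≤ (1 - x) ^ q := by
      rw [← sub_eq_add_neg]
      exact rpow_le_rpow_of_exponent_ge (by linarith) (by linarith) (le_max_left _ _)

lemma inv_one_sub_rpow_le {q x : ℝ} (hx : 0 ≤ x) (hmx : max q 1 * x ≤ 1 / 2) :
    (1 - x)⁻¹ ^ q ≤ 1 + 2 * max q 1 * x := by
  have hm : 1 ≤ max q 1 := le_max_right _ _
  have hx₁ : x < 1 := by nlinarith
  have hbern := mul_le_mul_of_nonneg_left (one_sub_mul_le_one_sub_rpow (q := q) hx hx₁)
    (by positivity : 0 ≤ 1 + 2 * max q 1 * x)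
  rw [inv_rpow (by linarith), ← one_div, div_le_iff₀ (by positivity)]
  nlinarith [mul_nonneg (mul_nonneg (by linarith : (0:ℝ) ≤ max q 1) hx)
    (by linarith : 0 ≤ 1 - 2 * (max q 1 * x))]

lemma mul_sq_div_two_sub_mul_one_sub_mul_rpow_div_le {p A x s : ℝ} (hp : 2 < p) (hA : 0 < A)
    (hx : 0 ≤ x) (hmx : max (2 / (p - 2)) 1 * x ≤ 1 / 2) (hs : 0 ≤ s) :
    A * s ^ 2 / 2 - A * (1 - x) * s ^ p / p
      ≤ (1 / 2 - 1 / p) * A * (1 + 2 * max (2 / (p - 2)) 1 * x) := by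
  have hx₁ : x < 1 := by nlinarith [le_max_right (2 / (p - 2)) 1]
  have hcoef : 0 ≤ (1 / 2 - 1 / p) * A := by
    have : 1 / p < 1 / 2 := one_div_lt_one_div_of_lt two_pos hp
    nlinarith
  calc A * s ^ 2 / 2 - A * (1 - x) * s ^ p / p
      ≤ (1 / 2 - 1 / p) * A * (A / (A * (1 - x))) ^ (2 / (p - 2)) :=
        mul_sq_div_two_sub_mul_rpow_div_le hp hA (by nlinarith) hs
    _ ≤ (1 / 2 - 1 / p) * A * (1 + 2 * max (2 / (p - 2)) 1 * x) := by
        rw [div_mul_cancel_left₀ hA.ne']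
        gcongr
        exact inv_one_sub_rpow_le hx hmx

/-- For `Q > 2`, `S > 0`, `C > 0`, `p = 2Q/(Q−2)`, `q = (Q−2)/2`, and
`Φ_ε(s) = (s²/2)·S^{Q/2} − (s^p/p)·S^{Q/2} + C·s^p·ε^q`, there exist `ε₀ > 0` and
`C′ > 0` such that for every `ε ∈ (0, ε₀)`,
`sup_{s ≥ 0} Φ_ε(s) ≤ (1/Q)·S^{Q/2} + C′·ε^{(Q−2)/2}`. -/
theorem stmt_2 (Q S C : ℝ) (hQ : 2 < Q) (hS : 0 < S) (hC : 0 < C)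
    (p q : ℝ) (hp : p = 2 * Q / (Q - 2)) (hq : q = (Q - 2) / 2)
    (Φ : ℝ → ℝ → ℝ)
    (hΦ : ∀ ε s : ℝ, Φ ε s = s ^ 2 / 2 * S ^ (Q / 2) - s ^ p / p * S ^ (Q / 2)
      + C * s ^ p * ε ^ q) :
    ∃ ε₀ > (0:ℝ), ∃ C' > (0:ℝ), ∀ ε : ℝ, ε ∈ Set.Ioo 0 ε₀ →
      ∀ s : ℝ, 0 ≤ s → Φ ε s ≤ 1 / Q * S ^ (Q / 2) + C' * ε ^ ((Q - 2) / 2) := by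
  have hQ2 : 0 < Q - 2 := by linarith
  have hp2 : 2 < p := by rw [hp, lt_div_iff₀ hQ2]; linarith
  have hq0 : 0 < q := by rw [hq]; linarith
  have hexp : 2 / (p - 2) = q := by
    rw [show p - 2 = 4 / (Q - 2) by rw [hp]; field_simp; ring, hq]; field_simp; ring
  have hcoef : 1 / 2 - 1 / p = 1 / Q := by rw [hp]; field_simp; ring
  set A := S ^ (Q / 2)
  have hA : 0 < A := by positivity
  set m := max q 1
  refine ⟨(A / (2 * m * p * C)) ^ q⁻¹, by positivity, 2 * m * p * C / Q, by positivity,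
    fun ε ⟨hε, hεε₀⟩ s hs => ?_⟩
  have hsmall : 2 * m * p * C * ε ^ q < A := by
    rwa [lt_rpow_inv_iff_of_pos hε.le (by positivity) hq0, lt_div_iff₀' (by positivity)] at hεε₀
  set x := p * C * ε ^ q / A
  have hmx : m * x ≤ 1 / 2 := by
    simp only [x]; rw [← mul_div_assoc, div_le_iff₀ (by positivity)]; linarith
  calc Φ ε s = A * s ^ 2 / 2 - A * (1 - x) * s ^ p / p := by
        simp only [hΦ, x]; field_simp; ring
    _ ≤ 1 / Q * A * (1 + 2 * m * x) := by
        have := mul_sq_div_two_sub_mul_one_sub_mul_rpow_div_le (x := x) hp2 hA (by positivity)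
          (by rwa [hexp]) hs
        rwa [hexp, hcoef] at this
    _ = 1 / Q * A + 2 * m * p * C / Q * ε ^ ((Q - 2) / 2) := by
        simp only [← hq, x]; field_simp
end

section
/- Let (Ω, μ) be a measure space, p > 1 a real number, B > 0, and let v, e₁ : Ω → ℝ be measurable with e₁ ≥ 0 almost everywhere. Assume there exist a measurable set H with 0 < μ(H) < ∞ and constants c > 0, M ≥ 0 such that e₁ ≥ c and |v| ≤ M almost everywhere on H, and assume that for every t ∈ ℝ the function (max(v + t·e₁, 0))^p is integrable on Ω. Then the function h(t) = B·t − (1/p)∫_Ω (max(v + t·e₁, 0))^p dμ is bounded above on ℝ, and h(t) → −∞ as t → +∞. -/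
/-! On `H` the integrand is at least `(t c - M) ^ p` once `t c ≥ M`, so `h t ≤ B t - μ(H) (t c - M) ^ p / p`
for large `t`, and since `p > 1` the power beats the linear term. Boundedness above then follows from
`h t ≤ B t`, as the integral is nonnegative. -/

open MeasureTheory Filter Real

theorem tendsto_mul_sub_mul_rpow_atTop_atBot {p : ℝ} (hp : 1 < p) {k : ℝ} (hk : 0 < k) (b : ℝ) :
    Tendsto (fun s : ℝ => b * s - k * s ^ p) atTop atBot := by
  have hprod : Tendsto (fun s : ℝ => s * (k * s ^ (p - 1) - b)) atTop atTop :=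
    tendsto_id.atTop_mul_atTop₀ <| tendsto_atTop_add_const_right _ (-b) <|
      (tendsto_rpow_atTop (by linarith)).const_mul_atTop hk
  refine (tendsto_neg_atTop_atBot.comp hprod).congr' ?_
  filter_upwards [eventually_gt_atTop 0] with s hs
  rw [Function.comp_apply, rpow_sub hs, rpow_one]
  field_simp
  ring

theorem exists_forall_le_of_tendsto_atBot_of_le_mul {h : ℝ → ℝ} {B : ℝ} (hB : 0 ≤ B)
    (hle : ∀ t, h t ≤ B * t) (hlim : Tendsto h atTop atBot) : ∃ K, ∀ t, h t ≤ K := by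
  obtain ⟨T, hT⟩ := eventually_atTop.1 (hlim.eventually (eventually_le_atBot 0))
  refine ⟨max (B * T) 0, fun t => ?_⟩
  rcases le_total t T with htT | hTt
  · exact (hle t).trans <| (mul_le_mul_of_nonneg_left htT hB).trans (le_max_left _ _)
  · exact (hT t hTt).trans (le_max_right _ _)

section

variable {Ω : Type*} [MeasurableSpace Ω] {μ : Measure Ω}

theorem mul_measureReal_le_integral_of_ae_le {f : Ω → ℝ} {H : Set Ω} (hH : MeasurableSet H)
    (hHfin : μ H ≠ ⊤) (hf : Integrable f μ) (hf0 : 0 ≤ᵐ[μ] f) {a : ℝ}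
    (haf : ∀ᵐ x ∂μ, x ∈ H → a ≤ f x) : a * μ.real H ≤ ∫ x, f x ∂μ :=
  calc a * μ.real H = ∫ _ in H, a ∂μ := by rw [setIntegral_const, smul_eq_mul, mul_comm]
    _ ≤ ∫ x in H, f x ∂μ := setIntegral_mono_on_ae (integrableOn_const hHfin) hf.integrableOn hH haf
    _ ≤ ∫ x, f x ∂μ := setIntegral_le_integral hf hf0

theorem rpow_mul_measureReal_le_integral_max_rpow {p : ℝ} (hp : 0 ≤ p) {v e : Ω → ℝ} {H : Set Ω}
    (hH : MeasurableSet H) (hHfin : μ H ≠ ⊤) {c M : ℝ} (he : ∀ᵐ x ∂μ, x ∈ H → c ≤ e x)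
    (hv : ∀ᵐ x ∂μ, x ∈ H → |v x| ≤ M) {t : ℝ} (ht : 0 ≤ t) (htM : M ≤ t * c)
    (hint : Integrable (fun x => max (v x + t * e x) 0 ^ p) μ) :
    (t * c - M) ^ p * μ.real H ≤ ∫ x, max (v x + t * e x) 0 ^ p ∂μ := by
  refine mul_measureReal_le_integral_of_ae_le hH hHfin hint
    (Eventually.of_forall fun x => rpow_nonneg (le_max_right _ _) _) ?_
  filter_upwards [he, hv] with x hex hvx hx
  have hlin : t * c - M ≤ v x + t * e x := by
    nlinarith [mul_le_mul_of_nonneg_left (hex hx) ht, (abs_le.mp (hvx hx)).1]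
  exact rpow_le_rpow (by linarith) (hlin.trans (le_max_left _ _)) hp

end

theorem stmt_8_general {Ω : Type*} [MeasurableSpace Ω] (μ : Measure Ω)
    (p : ℝ) (hp : 1 < p) (B : ℝ) (hB : 0 < B)
    (v e₁ : Ω → ℝ)
    (H : Set Ω) (hH : MeasurableSet H) (hHpos : 0 < μ H) (hHfin : μ H < ⊤)
    (c M : ℝ) (hc : 0 < c)
    (he₁c : ∀ᵐ x ∂μ, x ∈ H → c ≤ e₁ x)
    (hvM : ∀ᵐ x ∂μ, x ∈ H → |v x| ≤ M)
    (hint : ∀ t : ℝ, Integrable (fun x => max (v x + t * e₁ x) 0 ^ p) μ)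
    (h : ℝ → ℝ)
    (hhdef : ∀ t : ℝ, h t = B * t - 1 / p * ∫ x, max (v x + t * e₁ x) 0 ^ p ∂μ) :
    (∃ K : ℝ, ∀ t : ℝ, h t ≤ K) ∧ Tendsto h atTop atBot := by
  have hp0 : 0 < p := by linarith
  have hk : 0 < μ.real H / p := div_pos (ENNReal.toReal_pos hHpos.ne' hHfin.ne) hp0
  have hle_mul : ∀ t, h t ≤ B * t := fun t => by
    have : 0 ≤ 1 / p * ∫ x, max (v x + t * e₁ x) 0 ^ p ∂μ :=
      mul_nonneg (by positivity) (integral_nonneg fun x => rpow_nonneg (le_max_right _ _) _)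
    rw [hhdef]
    linarith
  -- written as `φ (c t - M) + B M / c` with `φ s = B / c * s - μ(H) / p * s ^ p`, to match `hlim`
  have hupper : ∀ᶠ t in atTop,
      h t ≤ (B / c * (c * t - M) - μ.real H / p * (c * t - M) ^ p) + B * M / c := by
    filter_upwards [eventually_ge_atTop 0, eventually_ge_atTop (M / c)] with t ht htM
    have hbound := rpow_mul_measureReal_le_integral_max_rpow hp0.le hH hHfin.ne he₁c hvM ht
      (by rwa [div_le_iff₀ hc] at htM) (hint t)
    calc h t ≤ B * t - 1 / p * ((t * c - M) ^ p * μ.real H) := by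
          rw [hhdef]; gcongr
      _ = _ := by rw [mul_comm c t]; field_simp; ring
  have hlim : Tendsto h atTop atBot :=
    tendsto_atBot_mono' atTop hupper <| tendsto_atBot_add_const_right _ _ <|
      (tendsto_mul_sub_mul_rpow_atTop_atBot hp hk (B / c)).comp <|
        tendsto_atTop_add_const_right _ (-M) (tendsto_id.const_mul_atTop hc)
  exact ⟨exists_forall_le_of_tendsto_atBot_of_le_mul hB.le hle_mul hlim, hlim⟩

/-- On a measure space `(Ω, μ)`, with `p > 1`, `B > 0`, measurable
`v, e₁` with `e₁ ≥ 0` a.e., a measurable set `H` with `0 < μ(H) < ∞` and constants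
`c > 0`, `M ≥ 0` such that `e₁ ≥ c` and `|v| ≤ M` a.e. on `H`, and assuming that
for every `t ∈ ℝ` the function `(max(v + t·e₁, 0))^p` is integrable on `Ω`, the
function `h(t) = B·t − (1/p)∫_Ω (max(v + t·e₁, 0))^p dμ` is bounded above on `ℝ`
and `h(t) → −∞` as `t → +∞`. -/
theorem stmt_8 {Ω : Type*} [MeasurableSpace Ω] (μ : Measure Ω)
    (p : ℝ) (hp : 1 < p) (B : ℝ) (hB : 0 < B)
    (v e₁ : Ω → ℝ) (hv : Measurable v) (he₁ : Measurable e₁)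
    (he₁nonneg : ∀ᵐ x ∂μ, 0 ≤ e₁ x)
    (H : Set Ω) (hH : MeasurableSet H) (hHpos : 0 < μ H) (hHfin : μ H < ⊤)
    (c M : ℝ) (hc : 0 < c) (hM : 0 ≤ M)
    (he₁c : ∀ᵐ x ∂μ, x ∈ H → c ≤ e₁ x)
    (hvM : ∀ᵐ x ∂μ, x ∈ H → |v x| ≤ M)
    (hint : ∀ t : ℝ, Integrable (fun x => max (v x + t * e₁ x) 0 ^ p) μ)
    (h : ℝ → ℝ)
    (hhdef : ∀ t : ℝ, h t = B * t - 1 / p * ∫ x, max (v x + t * e₁ x) 0 ^ p ∂μ) :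
    (∃ K : ℝ, ∀ t : ℝ, h t ≤ K) ∧ Tendsto h atTop atBot :=
  stmt_8_general μ p hp B hB v e₁ H hH hHpos hHfin c M hc he₁c hvM hint h hhdef
end

section
/- Let Q > 3 and S > 0 be real numbers and 0 < λ₁ < λ₂. Set a = 1 − λ₁/λ₂, b = Q/(Q+2), σ₀ = (b·a)^{(Q−2)/4}·S^{Q/4}, K₁ = (λ₂^{−Q/4}/(Q+2))·S^{Q/4}·b^{(Q−2)/4}·(λ₂ − λ₁)^{(Q+2)/4}, and α₀ = (1/(Q+2))·b^{(Q−2)/2}·a^{Q/2}·S^{Q/2}. Then for every real e with 0 ≤ e ≤ K₁, one has (1/2)·a·σ₀² − ((Q−2)/(2Q))·S^{−Q/(Q−2)}·σ₀^{2Q/(Q−2)} − e·λ₂^{−1/2}·σ₀ ≥ α₀ > 0. -/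
/-!
Everything is a monomial in `a`, `b`, `S`, `λ₂`. With `P = b^{(Q-2)/2} a^{Q/2} S^{Q/2}` one finds
`a σ₀² = P`, `S^{-Q/(Q-2)} σ₀^{2Q/(Q-2)} = b P` with `(Q-2)/(2Q) · b = (Q-2)/(2(Q+2))`, and, using
`λ₂ - λ₁ = a λ₂`, `K₁ λ₂^{-1/2} σ₀ = P/(Q+2)`. The left-hand side is therefore at least
`(1/2 - (Q-2)/(2(Q+2)) - 1/(Q+2)) P = P/(Q+2) = α₀`.
-/

open Real

section

variable {Q a b S : ℝ}

lemma mul_sq_rpow_mul_rpow (ha : 0 < a) (hb : 0 ≤ b) (hS : 0 ≤ S) :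
    a * ((b * a) ^ ((Q - 2) / 4) * S ^ (Q / 4)) ^ 2
      = b ^ ((Q - 2) / 2) * a ^ (Q / 2) * S ^ (Q / 2) := by
  have hσ_sq : ((b * a) ^ ((Q - 2) / 4) * S ^ (Q / 4)) ^ 2
      = b ^ ((Q - 2) / 2) * a ^ ((Q - 2) / 2) * S ^ (Q / 2) := by
    rw [mul_pow, ← rpow_mul_natCast (mul_nonneg hb ha.le), ← rpow_mul_natCast hS,
      mul_rpow hb ha.le]
    ring_nf
  rw [hσ_sq, show Q / 2 = (Q - 2) / 2 + 1 by ring, rpow_add ha, rpow_one]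
  ring

lemma rpow_neg_mul_rpow_critical (hQ : Q ≠ 2) (ha : 0 ≤ a) (hb : 0 ≤ b) (hS : 0 < S) :
    S ^ (-(Q / (Q - 2))) * ((b * a) ^ ((Q - 2) / 4) * S ^ (Q / 4)) ^ (2 * Q / (Q - 2))
      = b ^ (Q / 2) * a ^ (Q / 2) * S ^ (Q / 2) := by
  have hQ' : Q - 2 ≠ 0 := sub_ne_zero.2 hQ
  rw [mul_rpow (rpow_nonneg (mul_nonneg hb ha) _) (rpow_nonneg hS.le _),
    ← rpow_mul (mul_nonneg hb ha), ← rpow_mul hS.le, mul_rpow hb ha,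
    show (Q - 2) / 4 * (2 * Q / (Q - 2)) = Q / 2 by field_simp; ring]
  have hS_exp : S ^ (-(Q / (Q - 2))) * S ^ (Q / 4 * (2 * Q / (Q - 2))) = S ^ (Q / 2) := by
    rw [← rpow_add hS]
    congr 1
    field_simp
    ring
  rw [← hS_exp]
  ring

/-- The bound `K₁ λ₂^{-1/2} σ₀`, with `l = λ₂` and `a * l = λ₂ - λ₁`. -/
lemma rpow_mul_rpow_linear_term {l : ℝ} (ha : 0 < a) (hb : 0 ≤ b) (hS : 0 ≤ S) (hl : 0 < l) :
    l ^ (-(Q / 4)) * S ^ (Q / 4) * b ^ ((Q - 2) / 4) * (a * l) ^ ((Q + 2) / 4)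
        * l ^ (-(1 : ℝ) / 2) * ((b * a) ^ ((Q - 2) / 4) * S ^ (Q / 4))
      = b ^ ((Q - 2) / 2) * a ^ (Q / 2) * S ^ (Q / 2) := by
  have hl_exp : l ^ (-(Q / 4)) * l ^ ((Q + 2) / 4) * l ^ (-(1 : ℝ) / 2) = 1 := by
    rw [← rpow_add hl, ← rpow_add hl, show -(Q / 4) + (Q + 2) / 4 + -(1 : ℝ) / 2 = 0 by ring,
      rpow_zero]
  have ha_exp : a ^ ((Q + 2) / 4) * a ^ ((Q - 2) / 4) = a ^ (Q / 2) := by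
    rw [← rpow_add ha]; ring_nf
  have hb_exp : b ^ ((Q - 2) / 4) * b ^ ((Q - 2) / 4) = b ^ ((Q - 2) / 2) := by
    rw [← pow_two, ← rpow_mul_natCast hb]; ring_nf
  have hS_exp : S ^ (Q / 4) * S ^ (Q / 4) = S ^ (Q / 2) := by
    rw [← pow_two, ← rpow_mul_natCast hS]; ring_nf
  rw [mul_rpow ha.le hl.le, mul_rpow hb ha.le, ← ha_exp, ← hb_exp, ← hS_exp]
  linear_combination (b ^ ((Q - 2) / 4) * b ^ ((Q - 2) / 4) * (a ^ ((Q + 2) / 4) * a ^ ((Q - 2) / 4))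
    * (S ^ (Q / 4) * S ^ (Q / 4))) * hl_exp

end

/-- For `Q > 3`, `S > 0`, `0 < λ₁ < λ₂`, with `a = 1 − λ₁/λ₂`,
`b = Q/(Q+2)`, `σ₀ = (b·a)^{(Q−2)/4}·S^{Q/4}`,
`K₁ = (λ₂^{−Q/4}/(Q+2))·S^{Q/4}·b^{(Q−2)/4}·(λ₂ − λ₁)^{(Q+2)/4}` and
`α₀ = (1/(Q+2))·b^{(Q−2)/2}·a^{Q/2}·S^{Q/2}`: for every `0 ≤ e ≤ K₁`,
`(1/2)·a·σ₀² − ((Q−2)/(2Q))·S^{−Q/(Q−2)}·σ₀^{2Q/(Q−2)} − e·λ₂^{−1/2}·σ₀ ≥ α₀ > 0`. -/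
theorem stmt_10 (Q S lam₁ lam₂ : ℝ) (hQ : 3 < Q) (hS : 0 < S)
    (hlam₁ : 0 < lam₁) (hlam : lam₁ < lam₂)
    (a b σ₀ K₁ α₀ : ℝ)
    (ha : a = 1 - lam₁ / lam₂) (hb : b = Q / (Q + 2))
    (hσ₀ : σ₀ = (b * a) ^ ((Q - 2) / 4) * S ^ (Q / 4))
    (hK₁ : K₁ = lam₂ ^ (-(Q / 4)) / (Q + 2) * S ^ (Q / 4) * b ^ ((Q - 2) / 4)
      * (lam₂ - lam₁) ^ ((Q + 2) / 4))
    (hα₀ : α₀ = 1 / (Q + 2) * b ^ ((Q - 2) / 2) * a ^ (Q / 2) * S ^ (Q / 2)) :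
    ∀ e : ℝ, 0 ≤ e → e ≤ K₁ →
      1 / 2 * a * σ₀ ^ 2 - (Q - 2) / (2 * Q) * S ^ (-(Q / (Q - 2))) * σ₀ ^ (2 * Q / (Q - 2))
        - e * lam₂ ^ (-(1:ℝ) / 2) * σ₀ ≥ α₀ ∧ α₀ > 0 := by
  intro e _ heK
  have hl₂ : 0 < lam₂ := hlam₁.trans hlam
  have ha₀ : 0 < a := by
    rw [ha, sub_pos]
    exact (div_lt_one hl₂).2 hlam
  have hb₀ : 0 < b := by rw [hb]; positivity
  set P := b ^ ((Q - 2) / 2) * a ^ (Q / 2) * S ^ (Q / 2) with hP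
  have hα : α₀ = 1 / (Q + 2) * P := by rw [hα₀, hP]; ring
  have hα_pos : 0 < α₀ := by rw [hα]; positivity
  have h_quad : a * σ₀ ^ 2 = P := hσ₀ ▸ mul_sq_rpow_mul_rpow ha₀ hb₀.le hS.le
  have h_crit : (Q - 2) / (2 * Q) * S ^ (-(Q / (Q - 2))) * σ₀ ^ (2 * Q / (Q - 2))
      = (Q - 2) / (2 * (Q + 2)) * P := by
    have hb_pow : b ^ (Q / 2) = b * b ^ ((Q - 2) / 2) := by
      rw [mul_comm, ← rpow_add_one hb₀.ne']; ring_nf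
    have hb_coeff : (Q - 2) / (2 * Q) * b = (Q - 2) / (2 * (Q + 2)) := by
      rw [hb]; field_simp
    rw [mul_assoc, hσ₀, rpow_neg_mul_rpow_critical (by linarith) ha₀.le hb₀.le hS, hb_pow,
      ← hb_coeff, hP]
    ring
  have h_lin : K₁ * lam₂ ^ (-(1 : ℝ) / 2) * σ₀ = 1 / (Q + 2) * P := by
    have hgap : lam₂ - lam₁ = a * lam₂ := by rw [ha]; field_simp
    rw [hP, ← rpow_mul_rpow_linear_term (Q := Q) ha₀ hb₀.le hS.le hl₂, hK₁, hgap, hσ₀]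
    ring
  have h_err : e * lam₂ ^ (-(1 : ℝ) / 2) * σ₀ ≤ 1 / (Q + 2) * P := by
    have hσ₀_nonneg : 0 ≤ σ₀ := by rw [hσ₀]; positivity
    rw [← h_lin]
    gcongr
  have h_coeff : 1 / 2 * P - (Q - 2) / (2 * (Q + 2)) * P - 1 / (Q + 2) * P = 1 / (Q + 2) * P := by
    have hQ₂ : Q + 2 ≠ 0 := by linarith
    field_simp
    ring
  refine ⟨?_, hα_pos⟩
  rw [mul_assoc (1 / 2) a, h_quad, h_crit, hα]
  linarith
end
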